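/- arXiv:2501.19263 — 6 statements merged into one kernel-verified Lean document; each statement's English description precedes it below -/
import Mathlib

section
/- A nonempty closed convex set K ⊂ ℝⁿ is a C-pseudo-cone (i.e., a closed convex set not containing the origin, satisfying λK ⊆ K for all λ ≥ 1, and with recession cone equal to C) if and only if o ∉ K and K + C = K ⊆ C. -/
open Set Metric MeasureTheory
open scoped InnerProductSpace Pointwise

noncomputable section

abbrev E (n : ℕ) := EuclideanSpace ℝ (Fin n)

/-- The dual cone `C° = {x : ⟪x,y⟫ ≤ 0 ∀ y ∈ C}`. -/
def dualCone {n : ℕ} (C : Set (E n)) : Set (E n) := {x | ∀ y ∈ C, ⟪x, y⟫_ℝ ≤ 0}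

/-- `Ω_C = S^{n-1} ∩ int C`. -/
def OmegaC {n : ℕ} (C : Set (E n)) : Set (E n) := sphere (0 : E n) 1 ∩ interior C

/-- `Ω_{C°} = S^{n-1} ∩ int C°`. -/
def OmegaCp {n : ℕ} (C : Set (E n)) : Set (E n) := sphere (0 : E n) 1 ∩ interior (dualCone C)

/-- `C` is a closed convex pointed cone with nonempty interior. -/
structure IsPointedCone {n : ℕ} (C : Set (E n)) : Prop where
  closed : IsClosed C
  convex : Convex ℝ C
  cone : ∀ r : ℝ, 0 ≤ r → ∀ x ∈ C, r • x ∈ C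
  pointed : C ∩ (-C) = {(0 : E n)}
  intNonempty : (interior C).Nonempty

/-- `K` is a `C`-pseudo-cone: nonempty, closed, convex, `0 ∉ K`, `K + C = K ⊆ C`. -/
def IsPseudoCone {n : ℕ} (C K : Set (E n)) : Prop :=
  K.Nonempty ∧ IsClosed K ∧ Convex ℝ K ∧ (0 : E n) ∉ K ∧ K + C = K ∧ K ⊆ C

/-- The support function `h_K(u) = sup {⟪u,y⟫ : y ∈ K}`. -/
def suppFn {n : ℕ} (K : Set (E n)) (u : E n) : ℝ := sSup ((fun y => ⟪u, y⟫_ℝ) '' K)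

/-- The radial function `ρ_K(v) = min {r > 0 : r v ∈ K}`. -/
def radialFn {n : ℕ} (K : Set (E n)) (v : E n) : ℝ := sInf {r : ℝ | 0 < r ∧ r • v ∈ K}

/-- `u` is an outer normal vector of `K` at `x`. -/
def IsNormalAt {n : ℕ} (K : Set (E n)) (u x : E n) : Prop :=
  x ∈ K ∧ ∀ y ∈ K, ⟪u, y⟫_ℝ ≤ ⟪u, x⟫_ℝ

/-- The pseudo-subdifferential `∂•K`. -/
def pseudoSubdiff {n : ℕ} (C K : Set (E n)) : Set (E n × E n) :=
  {p | p.1 ∈ OmegaC C ∧ p.2 ∈ OmegaCp C ∧ IsNormalAt K p.2 (radialFn K p.1 • p.1)}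

section RecessionCone

open Filter Topology

variable {V : Type*} [AddCommGroup V]

def recessionCone (K : Set V) : Set V := {z | ∀ x ∈ K, x + z ∈ K}

theorem subset_recessionCone_iff {K C : Set V} : C ⊆ recessionCone K ↔ K + C ⊆ K := by
  rw [Set.add_subset_iff]
  exact ⟨fun h x hx z hz => h hz x hx, fun h z hz x hx => h x hx z hz⟩

theorem add_eq_self_of_subset_recessionCone {K C : Set V} (h0 : (0 : V) ∈ C)
    (h : C ⊆ recessionCone K) : K + C = K :=
  (subset_recessionCone_iff.1 h).antisymm (Set.subset_add_left K h0)

theorem add_nsmul_mem_of_mem_recessionCone {K : Set V} {x z : V} (hz : z ∈ recessionCone K)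
    (hx : x ∈ K) (m : ℕ) : x + m • z ∈ K := by
  induction m with
  | zero => simpa using hx
  | succ m ih => simpa only [succ_nsmul, add_assoc] using hz _ ih

variable [Module ℝ V]

theorem smul_subset_of_add_subset {K C : Set V} (hC : ∀ r : ℝ, 0 ≤ r → ∀ x ∈ C, r • x ∈ C)
    (hKC : K ⊆ C) (hadd : K + C ⊆ K) {l : ℝ} (hl : 1 ≤ l) : l • K ⊆ K := by
  rintro _ ⟨x, hx, rfl⟩
  have hx' : x + (l - 1) • x ∈ K :=
    hadd (Set.add_mem_add hx (hC (l - 1) (by linarith) x (hKC hx)))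
  rwa [show x + (l - 1) • x = l • x by module] at hx'

variable [TopologicalSpace V] [IsTopologicalAddGroup V] [ContinuousSMul ℝ V]

/-- `y + x = lim_{t → 0⁺} ((1 - t) • y + t • (t⁻¹ • x))`, a limit of points of `K`. -/
theorem subset_recessionCone_of_smul_subset {K : Set V} (hcl : IsClosed K) (hconv : Convex ℝ K)
    (hsmul : ∀ l : ℝ, 1 ≤ l → l • K ⊆ K) : K ⊆ recessionCone K := by
  intro x hx y hy
  have hmem : ∀ t ∈ Set.Ioo (0 : ℝ) 1, (1 - t) • y + x ∈ K := by
    rintro t ⟨ht0, ht1⟩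
    have hx' : t⁻¹ • x ∈ K := hsmul t⁻¹ ((one_le_inv₀ ht0).2 ht1.le) (Set.smul_mem_smul_set hx)
    simpa [smul_smul, ht0.ne'] using hconv hy hx' (by linarith) ht0.le (by ring)
  have htend : Tendsto (fun t : ℝ => (1 - t) • y + x) (𝓝[>] 0) (𝓝 (y + x)) := by
    have hcont : Continuous (fun t : ℝ => (1 - t) • y + x) := by fun_prop
    simpa using (hcont.tendsto 0).mono_left nhdsWithin_le_nhds
  exact hcl.mem_of_tendsto htend (eventually_of_mem (Ioo_mem_nhdsGT one_pos) hmem)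

/-- `z = lim_{m → ∞} m⁻¹ • (x + m • z)`, a limit of points of `C`. -/
theorem recessionCone_subset_of_subset {K C : Set V} (hCcl : IsClosed C)
    (hC : ∀ r : ℝ, 0 ≤ r → ∀ x ∈ C, r • x ∈ C) (hne : K.Nonempty) (hKC : K ⊆ C) :
    recessionCone K ⊆ C := by
  intro z hz
  obtain ⟨x, hx⟩ := hne
  have hmem : ∀ᶠ m : ℕ in atTop, (m : ℝ)⁻¹ • x + z ∈ C := by
    filter_upwards [eventually_ne_atTop 0] with m hm
    have := hC (m : ℝ)⁻¹ (by positivity) _ (hKC (add_nsmul_mem_of_mem_recessionCone hz hx m))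
    rwa [smul_add, ← Nat.cast_smul_eq_nsmul ℝ, smul_smul, inv_mul_cancel₀ (by exact_mod_cast hm),
      one_smul] at this
  have htend : Tendsto (fun m : ℕ => (m : ℝ)⁻¹ • x + z) atTop (𝓝 z) := by
    simpa using ((tendsto_inv_atTop_nhds_zero_nat (𝕜 := ℝ)).smul_const x).add_const z
  exact hCcl.mem_of_tendsto htend hmem

end RecessionCone

/-- A nonempty closed convex set `K` is a `C`-pseudo-cone (i.e. `0 ∉ K`,
`λK ⊆ K` for `λ ≥ 1`, and recession cone `{z : K + z ⊆ K}` equal to `C`)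
iff `0 ∉ K` and `K + C = K ⊆ C`. -/
theorem stmt0 {n : ℕ} (C K : Set (E n)) (hC : IsPointedCone C)
    (hne : K.Nonempty) (hcl : IsClosed K) (hconv : Convex ℝ K) :
    ((0 : E n) ∉ K ∧ (∀ l : ℝ, 1 ≤ l → l • K ⊆ K) ∧ {z : E n | ∀ x ∈ K, x + z ∈ K} = C)
      ↔ ((0 : E n) ∉ K ∧ K + C = K ∧ K ⊆ C) := by
  have h0C : (0 : E n) ∈ C := (hC.pointed.superset rfl).1
  change (_ ∧ _ ∧ recessionCone K = C) ↔ _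
  constructor
  · rintro ⟨h0, hsmul, hrec⟩
    refine ⟨h0, add_eq_self_of_subset_recessionCone h0C hrec.ge, ?_⟩
    exact hrec ▸ subset_recessionCone_of_smul_subset hcl hconv hsmul
  · rintro ⟨h0, hadd, hKC⟩
    refine ⟨h0, fun l hl => smul_subset_of_add_subset hC.cone hKC hadd.subset hl, ?_⟩
    exact (recessionCone_subset_of_subset hC.closed hC.cone hne hKC).antisymm
      (subset_recessionCone_iff.2 hadd.subset)
end
end

section
/- Every vector u ∈ S^{n−1} that occurs as an outer unit normal vector of a C-pseudo-cone K at some boundary point belongs to cl Ω_{C°}, the closure of S^{n−1} ∩ int C°. -/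
/-!
An outer normal `u` of `K` at `x` satisfies `⟪u, x + c⟫ ≤ ⟪u, x⟫` for every `c ∈ C`, since
`K + C ⊆ K`; hence `u ∈ C°`. Because `C` is pointed, `C°` has nonempty interior (otherwise it
would lie in a hyperplane `v⊥`, and by the bipolar inclusion `C°° ⊆ C` both `±v` would lie in
`C`). So the closed convex set `C°` is the closure of its interior, and normalising points of
`int C°` close to the unit vector `u` gives points of `Ω_{C°}` close to `u`.
-/

open Set Metric MeasureTheory
open scoped InnerProductSpace Pointwise

noncomputable section

theorem sphere_inter_closure_subset_closure_sphere_inter {F : Type*} [NormedAddCommGroup F]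
    [NormedSpace ℝ F] {S : Set F} (hS : ∀ r : ℝ, 0 < r → ∀ v ∈ S, r • v ∈ S) :
    sphere (0 : F) 1 ∩ closure S ⊆ closure (sphere (0 : F) 1 ∩ S) := by
  rintro u ⟨hu, huS⟩
  have hu_norm : ‖u‖ = 1 := mem_sphere_zero_iff_norm.mp hu
  have hu_ne : u ≠ 0 := norm_ne_zero_iff.mp (by simp [hu_norm])
  have hu_cl : u ∈ closure ({0}ᶜ ∩ S) := isOpen_compl_singleton.inter_closure ⟨hu_ne, huS⟩
  set normalize : F → F := fun v => ‖v‖⁻¹ • v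
  have hcont : ContinuousWithinAt normalize ({0}ᶜ ∩ S) u :=
    ((continuous_norm.continuousAt.inv₀ (norm_ne_zero_iff.mpr hu_ne)).smul
      continuousAt_id).continuousWithinAt
  have himage : normalize '' ({0}ᶜ ∩ S) ⊆ sphere 0 1 ∩ S := by
    rintro _ ⟨v, ⟨hv0, hvS⟩, rfl⟩
    have hv : 0 < ‖v‖ := norm_pos_iff.mpr hv0
    refine ⟨?_, hS _ (inv_pos.mpr hv) v hvS⟩
    rw [mem_sphere_zero_iff_norm, norm_smul, norm_inv, norm_norm, inv_mul_cancel₀ hv.ne']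
  simpa [normalize, hu_norm] using closure_mono himage (hcont.mem_closure_image hu_cl)

theorem exists_ne_zero_forall_inner_eq_zero_of_interior_eq_empty {V : Type*}
    [NormedAddCommGroup V] [InnerProductSpace ℝ V] [FiniteDimensional ℝ V] {s : Set V}
    (hs : Convex ℝ s) (h0 : 0 ∈ s) (hint : interior s = ∅) :
    ∃ v ≠ 0, ∀ y ∈ s, ⟪v, y⟫_ℝ = 0 := by
  have hspan : vectorSpan ℝ s ≠ ⊤ := by
    rw [Ne, ← AffineSubspace.affineSpan_eq_top_iff_vectorSpan_eq_top_of_nonempty ℝ V V ⟨0, h0⟩,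
      ← hs.interior_nonempty_iff_affineSpan_eq_top, hint]
    exact not_nonempty_empty
  obtain ⟨v, hv, hv0⟩ := Submodule.exists_mem_ne_zero_of_ne_bot
    (mt Submodule.orthogonal_eq_bot_iff.mp hspan)
  refine ⟨v, hv0, fun y hy => Submodule.inner_left_of_mem_orthogonal ?_ hv⟩
  simpa using vsub_mem_vectorSpan ℝ hy h0

theorem smul_mem_interior_of_forall_smul_mem {F : Type*} [NormedAddCommGroup F]
    [NormedSpace ℝ F] {S : Set F} (hS : ∀ r : ℝ, 0 < r → ∀ v ∈ S, r • v ∈ S) {r : ℝ}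
    (hr : 0 < r) {v : F} (hv : v ∈ interior S) : r • v ∈ interior S := by
  have h : r • v ∈ interior (r • S) := by
    rw [interior_smul₀ hr.ne']; exact smul_mem_smul_set hv
  exact interior_mono (by rintro _ ⟨w, hw, rfl⟩; exact hS r hr w hw) h

section DualCone

variable {n : ℕ} {C : Set (E n)}

theorem dualCone_eq_biInter : dualCone C = ⋂ y ∈ C, {x | ⟪x, y⟫_ℝ ≤ 0} := by
  ext; simp [dualCone]

theorem isClosed_dualCone : IsClosed (dualCone C) :=
  dualCone_eq_biInter ▸ isClosed_biInter fun _ _ => isClosed_le (by fun_prop) continuous_const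

theorem convex_dualCone : Convex ℝ (dualCone C) :=
  dualCone_eq_biInter ▸ convex_iInter₂ fun y _ =>
    convex_halfSpace_le (innerₛₗ ℝ |>.flip y).isLinear 0

theorem zero_mem_dualCone : (0 : E n) ∈ dualCone C :=
  fun y _ => by simp

theorem smul_mem_dualCone {r : ℝ} (hr : 0 ≤ r) {x : E n} (hx : x ∈ dualCone C) :
    r • x ∈ dualCone C := fun y hy => by
  rw [real_inner_smul_left]; exact mul_nonpos_of_nonneg_of_nonpos hr (hx y hy)

theorem dualCone_dualCone_subset (hcl : IsClosed C) (hcv : Convex ℝ C)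
    (hcone : ∀ r : ℝ, 0 ≤ r → ∀ x ∈ C, r • x ∈ C) (h0 : (0 : E n) ∈ C) :
    dualCone (dualCone C) ⊆ C := by
  intro x hx
  by_contra hxC
  obtain ⟨f, a, hfC, hfx⟩ := geometric_hahn_banach_closed_point hcv hcl hxC
  have ha : 0 < a := by simpa using hfC 0 h0
  -- `f` is bounded above on the cone `C`, hence nonpositive there.
  have hf_nonpos : ∀ c ∈ C, f c ≤ 0 := by
    intro c hc
    by_contra! hfc
    have := hfC ((a / f c) • c) (hcone _ (div_pos ha hfc).le c hc)
    rw [map_smul, smul_eq_mul, div_mul_cancel₀ _ hfc.ne'] at this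
    exact lt_irrefl a this
  set w := (InnerProductSpace.toDual ℝ (E n)).symm f
  have hw : ∀ y, ⟪w, y⟫_ℝ = f y := fun y => InnerProductSpace.toDual_symm_apply
  have hxw : ⟪x, w⟫_ℝ ≤ 0 := hx w fun c hc => (hw c).symm ▸ hf_nonpos c hc
  rw [real_inner_comm, hw] at hxw
  linarith

theorem interior_dualCone_nonempty (hC : IsPointedCone C) :
    (interior (dualCone C)).Nonempty := by
  by_contra! hint
  obtain ⟨v, hv0, hv⟩ := exists_ne_zero_forall_inner_eq_zero_of_interior_eq_empty
    convex_dualCone zero_mem_dualCone hint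
  have h0 : (0 : E n) ∈ C := by
    obtain ⟨z, hz⟩ := hC.intNonempty
    simpa using hC.cone 0 le_rfl z (interior_subset hz)
  have hbipolar := dualCone_dualCone_subset hC.closed hC.convex hC.cone h0
  have hv_mem : v ∈ C := hbipolar fun y hy => (hv y hy).le
  have hnegv_mem : -v ∈ C := hbipolar fun y hy => by rw [inner_neg_left, hv y hy, neg_zero]
  have : v ∈ C ∩ -C := ⟨hv_mem, by simpa using hnegv_mem⟩
  exact hv0 (by simpa [hC.pointed] using this)

theorem mem_dualCone_of_isNormalAt {K : Set (E n)} (hKC : K + C ⊆ K) {u x : E n}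
    (hu : IsNormalAt K u x) : u ∈ dualCone C := fun c hc => by
  have := hu.2 (x + c) (hKC (add_mem_add hu.1 hc))
  rw [inner_add_right] at this
  linarith

end DualCone

/-- every outer unit normal vector of a `C`-pseudo-cone belongs to `cl Ω_{C°}`. -/
theorem stmt5 {n : ℕ} (C K : Set (E n)) (hC : IsPointedCone C) (hK : IsPseudoCone C K)
    (u x : E n) (hu : u ∈ sphere (0 : E n) 1) (hnorm : IsNormalAt K u x) :
    u ∈ closure (OmegaCp C) := by
  obtain ⟨-, -, -, -, hKC, -⟩ := hK
  have hu_dual : u ∈ dualCone C := mem_dualCone_of_isNormalAt hKC.subset hnorm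
  have hu_cl : u ∈ closure (interior (dualCone C)) := by
    rwa [convex_dualCone.closure_interior_eq_closure_of_nonempty_interior
      (interior_dualCone_nonempty hC), isClosed_dualCone.closure_eq]
  have h_int_cone : ∀ r : ℝ, 0 < r → ∀ v ∈ interior (dualCone C), r • v ∈ interior (dualCone C) :=
    fun r hr v hv => smul_mem_interior_of_forall_smul_mem
      (fun s hs w hw => smul_mem_dualCone hs.le hw) hr hv
  exact sphere_inter_closure_subset_closure_sphere_inter h_int_cone ⟨hu, hu_cl⟩
end
end

section
/- For a C-pseudo-cone K, the pseudo-subdifferential ∂•K := {(v,u) ∈ Ω_C × Ω_{C°} : u is a normal vector of K at ρ_K(v)v} is c-cyclically monotone for the cost function c(v,u) = log|⟨v,u⟩|: for any m ∈ ℕ, any (v_1,u_1),…,(v_m,u_m) ∈ ∂•K, and any permutation σ of {1,…,m}, ∑_{i=1}^m log|⟨v_i, u_i⟩| ≤ ∑_{i=1}^m log|⟨v_i, u_{σ(i)}⟩|. -/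
open Set Metric MeasureTheory
open scoped InnerProductSpace Pointwise

noncomputable section

/-- the pseudo-subdifferential `∂•K` is `c`-cyclically monotone for
`c(v,u) = log |⟪v,u⟫|`. -/
theorem stmt7 {n : ℕ} (C K : Set (E n)) (hC : IsPointedCone C) (hK : IsPseudoCone C K)
    (m : ℕ) (v u : Fin m → E n) (hS : ∀ i, (v i, u i) ∈ pseudoSubdiff C K)
    (σ : Equiv.Perm (Fin m)) :
    ∑ i, Real.log |⟪v i, u i⟫_ℝ| ≤ ∑ i, Real.log |⟪v i, u (σ i)⟫_ℝ| := by
  set ρ : Fin m → ℝ := fun i => radialFn K (v i) with hρdef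
  have hmem : ∀ i, ρ i • v i ∈ K := fun i => (hS i).2.2.1
  have hρpos : ∀ i, 0 < ρ i := by
    intro i
    have h0 : 0 ≤ ρ i := Real.sInf_nonneg (fun r hr => le_of_lt hr.1)
    rcases h0.lt_or_eq with h | h
    · exact h
    · exfalso
      have hz := hmem i
      rw [← h, zero_smul] at hz
      exact hK.2.2.2.1 hz
  have hneg : ∀ i j, ⟪v i, u j⟫_ℝ < 0 := by
    intro i j
    obtain ⟨hv1, hv2⟩ := (hS i).1
    obtain ⟨hu1, hu2⟩ := (hS j).2.1
    have hud : u j ∈ dualCone C := interior_subset hu2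
    have hnhds : C ∈ nhds (v i) := mem_interior_iff_mem_nhds.mp hv2
    obtain ⟨ε, hε, hball⟩ := Metric.mem_nhds_iff.mp hnhds
    have hun : ‖u j‖ = 1 := by simpa using mem_sphere_zero_iff_norm.mp hu1
    have hy : v i + (ε / 2) • u j ∈ C := by
      apply hball
      rw [Metric.mem_ball, dist_eq_norm]
      have : v i + (ε / 2) • u j - v i = (ε / 2) • u j := by abel
      rw [this, norm_smul, hun, mul_one, Real.norm_eq_abs, abs_of_pos (half_pos hε)]
      linarith
    have := hud _ hy
    rw [inner_add_right, real_inner_smul_right, real_inner_self_eq_norm_sq, hun] at this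
    rw [real_inner_comm]
    nlinarith
  have hkey : ∀ i j, ρ i * ⟪u j, v i⟫_ℝ ≤ ρ j * ⟪u j, v j⟫_ℝ := by
    intro i j
    have h := (hS j).2.2.2 (ρ i • v i) (hmem i)
    rw [real_inner_smul_right, real_inner_smul_right] at h
    exact h
  have hlog : ∀ i j, Real.log (ρ j) - Real.log (ρ i) + Real.log |⟪v j, u j⟫_ℝ|
      ≤ Real.log |⟪v i, u j⟫_ℝ| := by
    intro i j
    have ai : (0:ℝ) < |⟪v i, u j⟫_ℝ| := abs_pos.mpr (ne_of_lt (hneg i j))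
    have aj : (0:ℝ) < |⟪v j, u j⟫_ℝ| := abs_pos.mpr (ne_of_lt (hneg j j))
    have hb : (ρ j / ρ i) * |⟪v j, u j⟫_ℝ| ≤ |⟪v i, u j⟫_ℝ| := by
      rw [abs_of_neg (hneg i j), abs_of_neg (hneg j j), div_mul_eq_mul_div,
        div_le_iff₀ (hρpos i)]
      have e1 : ⟪v i, u j⟫_ℝ = ⟪u j, v i⟫_ℝ := real_inner_comm _ _
      have e2 : ⟪v j, u j⟫_ℝ = ⟪u j, v j⟫_ℝ := real_inner_comm _ _
      rw [e1, e2]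
      linarith [hkey i j]
    have hpos : (0:ℝ) < (ρ j / ρ i) * |⟪v j, u j⟫_ℝ| :=
      mul_pos (div_pos (hρpos j) (hρpos i)) aj
    calc Real.log (ρ j) - Real.log (ρ i) + Real.log |⟪v j, u j⟫_ℝ|
        = Real.log ((ρ j / ρ i) * |⟪v j, u j⟫_ℝ|) := by
          rw [Real.log_mul (ne_of_gt (div_pos (hρpos j) (hρpos i))) (ne_of_gt aj),
            Real.log_div (ne_of_gt (hρpos j)) (ne_of_gt (hρpos i))]
      _ ≤ Real.log |⟪v i, u j⟫_ℝ| := Real.log_le_log hpos hb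
  have hsum : ∑ i, (Real.log (ρ (σ i)) - Real.log (ρ i)
        + Real.log |⟪v (σ i), u (σ i)⟫_ℝ|)
      ≤ ∑ i, Real.log |⟪v i, u (σ i)⟫_ℝ| :=
    Finset.sum_le_sum fun i _ => hlog i (σ i)
  refine le_trans ?_ hsum
  have h1 : ∑ i, Real.log (ρ (σ i)) = ∑ i, Real.log (ρ i) :=
    Equiv.sum_comp σ fun i => Real.log (ρ i)
  have h2 : ∑ i, Real.log |⟪v (σ i), u (σ i)⟫_ℝ| = ∑ i, Real.log |⟪v i, u i⟫_ℝ| :=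
    Equiv.sum_comp σ fun i => Real.log |⟪v i, u i⟫_ℝ|
  rw [Finset.sum_add_distrib, Finset.sum_sub_distrib, h1, h2]
  linarith
end
end

section
/- (Rochet–Rüschendorf construction) Let X, Y be sets, c : X × Y → ℝ a cost function, and S ⊆ X × Y a c-cyclically monotone set containing a point (x₀,y₀). Define φ(x) = inf{ c(x,y_m) − c(x₀,y₀) + ∑_{k=1}^m (c(x_k, y_{k−1}) − c(x_k,y_k)) }, the infimum over all m ∈ ℕ and (x_1,y_1),…,(x_m,y_m) ∈ S. Then φ(x₀) = 0, φ : X → [−∞,∞), and S ⊆ ∂^c φ, where ∂^c φ = {(x,y) : c(x,y) − φ(x) ≤ c(z,y) − φ(z) for all z ∈ X}. -/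
open Set Metric MeasureTheory
open scoped InnerProductSpace Pointwise

noncomputable section

/-- Rochet–Rüschendorf: if `S ⊆ X × Y` is `c`-cyclically monotone and
`(x₀,y₀) ∈ S`, then the function `φ` built from chains in `S` satisfies `φ(x₀) = 0`,
`φ < ∞`, and `S ⊆ ∂^c φ`. -/
theorem stmt13 {X Y : Type*} (c : X → Y → ℝ) (S : Set (X × Y))
    (hmono : ∀ N : ℕ, ∀ f : Fin N → X × Y, (∀ i, f i ∈ S) →
      ∀ σ : Equiv.Perm (Fin N),
        ∑ i, c (f i).1 (f i).2 ≤ ∑ i, c (f i).1 (f (σ i)).2)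
    (x₀ : X) (y₀ : Y) (h₀ : (x₀, y₀) ∈ S)
    (φ : X → EReal)
    (hφ : ∀ x, φ x = sInf {t : EReal | ∃ m : ℕ, ∃ p : Fin (m + 1) → X × Y,
      p 0 = (x₀, y₀) ∧ (∀ k : Fin m, p k.succ ∈ S) ∧
      t = ((c x (p (Fin.last m)).2 - c x₀ y₀ +
        ∑ k : Fin m, (c (p k.succ).1 (p k.castSucc).2 - c (p k.succ).1 (p k.succ).2) : ℝ) : EReal)}) :
    φ x₀ = 0 ∧ (∀ x, φ x < ⊤) ∧
      ∀ p ∈ S, ∀ z : X, φ z ≤ φ p.1 + ((c z p.2 - c p.1 p.2 : ℝ) : EReal) := by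
  -- the one-step chain gives membership of `c x y₀ - c x₀ y₀`
  have mem0 : ∀ x : X, ((c x y₀ - c x₀ y₀ : ℝ) : EReal) ∈
      {t : EReal | ∃ m : ℕ, ∃ p : Fin (m + 1) → X × Y,
        p 0 = (x₀, y₀) ∧ (∀ k : Fin m, p k.succ ∈ S) ∧
        t = ((c x (p (Fin.last m)).2 - c x₀ y₀ +
          ∑ k : Fin m, (c (p k.succ).1 (p k.castSucc).2 - c (p k.succ).1 (p k.succ).2) : ℝ) : EReal)} := by
    intro x
    refine ⟨0, fun _ => (x₀, y₀), rfl, fun k => k.elim0, ?_⟩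
    norm_num
  -- cyclic monotonicity: each chain value is nonnegative at x₀
  have nonneg : ∀ (m : ℕ) (p : Fin (m + 1) → X × Y), p 0 = (x₀, y₀) →
      (∀ k : Fin m, p k.succ ∈ S) →
      0 ≤ c x₀ (p (Fin.last m)).2 - c x₀ y₀ +
        ∑ k : Fin m, (c (p k.succ).1 (p k.castSucc).2 - c (p k.succ).1 (p k.succ).2) := by
    intro m p hp0 hpS
    have hpmem : ∀ i, p i ∈ S := by
      intro i
      induction i using Fin.cases with
      | zero => rw [hp0]; exact h₀
      | succ k => exact hpS k
    set σ : Equiv.Perm (Fin (m + 1)) := (finRotate (m + 1)).symm with hσ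
    have key := hmono (m + 1) p hpmem σ
    have hσ0 : σ 0 = Fin.last m := by
      rw [hσ, Equiv.symm_apply_eq, finRotate_succ_apply, Fin.last_add_one]
    have hσs : ∀ k : Fin m, σ k.succ = k.castSucc := by
      intro k
      rw [hσ, Equiv.symm_apply_eq, finRotate_succ_apply, Fin.coeSucc_eq_succ]
    rw [Fin.sum_univ_succ, Fin.sum_univ_succ (f := fun i => c (p i).1 (p (σ i)).2)] at key
    simp only [hσ0, hσs, hp0] at key
    rw [Finset.sum_sub_distrib]
    simp only [hp0] at *
    linarith
  refine ⟨?_, ?_, ?_⟩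
  · -- φ x₀ = 0
    refine le_antisymm ?_ ?_
    · rw [hφ x₀]
      have h := sInf_le (mem0 x₀)
      simpa using h
    · rw [hφ x₀]
      refine le_sInf ?_
      rintro t ⟨m, p, hp0, hpS, rfl⟩
      exact_mod_cast nonneg m p hp0 hpS
  · -- φ x < ⊤
    intro x
    rw [hφ x]
    exact lt_of_le_of_lt (sInf_le (mem0 x)) (EReal.coe_lt_top _)
  · -- S ⊆ ∂^c φ
    rintro ⟨x, y⟩ hxy z
    simp only
    rw [← EReal.sub_le_iff_le_add (Or.inl (EReal.coe_ne_bot _))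
      (Or.inl (EReal.coe_ne_top _))]
    rw [hφ x]
    refine le_sInf ?_
    rintro t ⟨m, p, hp0, hpS, rfl⟩
    rw [EReal.sub_le_iff_le_add (Or.inl (EReal.coe_ne_bot _))
      (Or.inl (EReal.coe_ne_top _)), hφ z, ← EReal.coe_add]
    refine sInf_le ?_
    refine ⟨m + 1, Fin.snoc p (x, y), ?_, ?_, ?_⟩
    · rw [show (0 : Fin (m + 2)) = Fin.castSucc 0 by simp, Fin.snoc_castSucc]
      exact hp0
    · intro k
      induction k using Fin.lastCases with
      | last => rw [Fin.succ_last, Fin.snoc_last]; exact hxy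
      | cast j => rw [Fin.succ_castSucc, Fin.snoc_castSucc]; exact hpS j
    · rw [EReal.coe_eq_coe_iff]
      rw [Fin.sum_univ_castSucc
        (f := fun k : Fin (m + 1) => c ((Fin.snoc p (x, y) : Fin (m+2) → X × Y) k.succ).1
          ((Fin.snoc p (x, y) : Fin (m+2) → X × Y) k.castSucc).2
          - c ((Fin.snoc p (x, y) : Fin (m+2) → X × Y) k.succ).1
          ((Fin.snoc p (x, y) : Fin (m+2) → X × Y) k.succ).2)]
      simp only [Fin.succ_castSucc, Fin.snoc_castSucc, Fin.succ_last, Fin.snoc_last]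
      ring
end
end

section
/- Let K be a C-pseudo-cone, φ(v) = −log ρ_K(v), and c(v,u) = log|⟨v,u⟩|. Then for (v,u) ∈ Ω_C × Ω_{C°}: (v,u) ∈ ∂^c φ if and only if (v,u) ∈ ∂•K; i.e., c(v,u) − φ(v) ≤ c(w,u) − φ(w) for all w ∈ Ω_C if and only if u is an outer normal vector of K at ρ_K(v)v. -/
open Set Metric MeasureTheory
open scoped InnerProductSpace Pointwise

noncomputable section

/-! Because `⟪w, u⟫ < 0` on `Ω_C × Ω_{C°}`, exponentiating turns the `c`-subgradient inequality
at `w` into `⟪u, ρ_K(w) w⟫ ≤ ⟪u, ρ_K(v) v⟫`. Every point of `K ∩ int C` lies on a ray `ℝ₊ w`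
with `w ∈ Ω_C`, where `⟪u, ·⟫` is maximal at the first point `ρ_K(w) w` of `K`; as `int K` is
dense in the convex body `K`, the supremum of `⟪u, ·⟫` over these points is the one over `K`. -/

open Filter Topology

section

variable {n : ℕ} {C K : Set (E n)}

lemma inner_neg_of_mem_interior_dualCone {u w : E n} (hu : u ∈ interior (dualCone C))
    (hw : w ∈ C) (hw0 : w ≠ 0) : ⟪u, w⟫_ℝ < 0 := by
  have hlim : Tendsto (fun t : ℝ => u + t • w) (𝓝[>] 0) (𝓝 u) := by
    have : Continuous (fun t : ℝ => u + t • w) := by fun_prop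
    simpa using (this.tendsto 0).mono_left nhdsWithin_le_nhds
  obtain ⟨t, hmem, ht⟩ :=
    ((hlim.eventually (mem_interior_iff_mem_nhds.mp hu)).and self_mem_nhdsWithin).exists
  have hle := hmem w hw
  rw [inner_add_left, real_inner_smul_left, real_inner_self_eq_norm_sq] at hle
  have : 0 < t * ‖w‖ ^ 2 := mul_pos ht (by positivity)
  linarith

lemma inner_neg_of_mem_OmegaC {u w : E n} (hu : u ∈ interior (dualCone C)) (hw : w ∈ OmegaC C) :
    ⟪u, w⟫_ℝ < 0 :=
  inner_neg_of_mem_interior_dualCone hu (interior_subset hw.2)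
    (ne_zero_of_mem_unit_sphere ⟨w, hw.1⟩)

lemma IsPointedCone.smul_mem_interior (hC : IsPointedCone C) {t : ℝ} (ht : 0 < t) {z : E n}
    (hz : z ∈ interior C) : t • z ∈ interior C := by
  refine interior_maximal ?_ (isOpen_interior.smul₀ ht.ne') (smul_mem_smul_set hz)
  rintro _ ⟨x, hx, rfl⟩
  exact hC.cone t ht.le x (interior_subset hx)

lemma IsPseudoCone.add_mem (hK : IsPseudoCone C K) {y c : E n} (hy : y ∈ K) (hc : c ∈ C) :
    y + c ∈ K :=
  hK.2.2.2.2.1 ▸ add_mem_add hy hc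

lemma IsPseudoCone.subset_closure_interior (hC : IsPointedCone C) (hK : IsPseudoCone C K) :
    K ⊆ closure (interior K) := by
  obtain ⟨y, hy⟩ := hK.1
  obtain ⟨z, hz⟩ := hC.intNonempty
  have hint : (interior K).Nonempty := by
    refine ⟨y + z, interior_maximal ?_ (isOpen_interior.vadd y) (vadd_mem_vadd_set hz)⟩
    rintro _ ⟨c, hc, rfl⟩
    exact hK.add_mem hy (interior_subset hc)
  rw [hK.2.2.1.closure_interior_eq_closure_of_nonempty_interior hint]
  exact subset_closure

section radial

variable {v : E n}

lemma radialFn_le {r : ℝ} (hr : 0 < r) (hrv : r • v ∈ K) : radialFn K v ≤ r :=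
  csInf_le ⟨0, fun _ hs => hs.1.le⟩ ⟨hr, hrv⟩

/-- The infimum defining `ρ_K(v)` is attained: `{r > 0 | r v ∈ K}` equals the closed set
`{r ≥ 0 | r v ∈ K}` because `0 ∉ K`, and it is nonempty because `v` is interior to `C`. -/
lemma radialFn_mem (hC : IsPointedCone C) (hK : IsPseudoCone C K) (hv : v ∈ interior C) :
    0 < radialFn K v ∧ radialFn K v • v ∈ K := by
  obtain ⟨y, hy⟩ := hK.1
  have hS : {r : ℝ | 0 < r ∧ r • v ∈ K} = Ici 0 ∩ (fun r : ℝ => r • v) ⁻¹' K := by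
    ext r
    refine ⟨fun h => ⟨h.1.le, h.2⟩, fun h => ⟨h.1.lt_of_ne ?_, h.2⟩⟩
    rintro rfl
    exact hK.2.2.2.1 (by simpa using h.2)
  have hlim : Tendsto (fun r : ℝ => v - r⁻¹ • y) atTop (𝓝 v) := by
    simpa using tendsto_const_nhds.sub (tendsto_inv_atTop_zero.smul_const (M := ℝ) y)
  obtain ⟨r, hrC, hr⟩ :=
    ((hlim.eventually (mem_interior_iff_mem_nhds.mp hv)).and (eventually_gt_atTop 0)).exists
  have hrv : r • v ∈ K := by
    have := hK.add_mem hy (hC.cone r hr.le _ hrC)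
    rwa [smul_sub, smul_smul, mul_inv_cancel₀ hr.ne', one_smul, add_sub_cancel] at this
  have hclosed : IsClosed (Ici 0 ∩ (fun r : ℝ => r • v) ⁻¹' K) :=
    isClosed_Ici.inter (hK.2.1.preimage (by fun_prop))
  have := hclosed.csInf_mem ⟨r, hr.le, hrv⟩ ⟨0, fun _ hs => hs.1⟩
  rwa [← hS] at this

end radial

lemma log_abs_add_log_le_log_abs_add_log_iff {a b r s : ℝ} (ha : a < 0) (hb : b < 0)
    (hr : 0 < r) (hs : 0 < s) :
    Real.log |a| + Real.log r ≤ Real.log |b| + Real.log s ↔ s * b ≤ r * a := by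
  rw [abs_of_neg ha, abs_of_neg hb, ← Real.log_mul (by linarith) hr.ne',
    ← Real.log_mul (by linarith) hs.ne', Real.log_le_log_iff (by nlinarith) (by nlinarith)]
  constructor <;> intro h <;> linarith

lemma cSubgradient_ineq_iff (hC : IsPointedCone C) (hK : IsPseudoCone C K) {u v w : E n}
    (hu : u ∈ interior (dualCone C)) (hv : v ∈ OmegaC C) (hw : w ∈ OmegaC C) :
    Real.log |⟪v, u⟫_ℝ| - (-Real.log (radialFn K v)) ≤
        Real.log |⟪w, u⟫_ℝ| - (-Real.log (radialFn K w)) ↔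
      ⟪u, radialFn K w • w⟫_ℝ ≤ ⟪u, radialFn K v • v⟫_ℝ := by
  have huv := inner_neg_of_mem_OmegaC hu hv
  have huw := inner_neg_of_mem_OmegaC hu hw
  rw [real_inner_comm] at huv huw
  rw [sub_neg_eq_add, sub_neg_eq_add, log_abs_add_log_le_log_abs_add_log_iff huv huw
    (radialFn_mem hC hK hv.2).1 (radialFn_mem hC hK hw.2).1, real_inner_smul_right,
    real_inner_smul_right, real_inner_comm w, real_inner_comm v]

/-- Normalising `x` to `w = x / ‖x‖` gives `ρ_K(w) ≤ ‖x‖`; since `⟪u, w⟫ < 0`, moving from `x`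
back to `ρ_K(w) w` can only increase `⟪u, ·⟫`. -/
lemma exists_mem_OmegaC_inner_le_inner_radialFn_smul (hC : IsPointedCone C)
    (hK : IsPseudoCone C K) {u x : E n} (hu : u ∈ interior (dualCone C)) (hxK : x ∈ K)
    (hxC : x ∈ interior C) : ∃ w ∈ OmegaC C, ⟪u, x⟫_ℝ ≤ ⟪u, radialFn K w • w⟫_ℝ := by
  have hx : 0 < ‖x‖ := norm_pos_iff.mpr (ne_of_mem_of_not_mem hxK hK.2.2.2.1)
  obtain ⟨w, hw_def⟩ : ∃ w : E n, w = ‖x‖⁻¹ • x := ⟨_, rfl⟩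
  have hxw : ‖x‖ • w = x := by rw [hw_def, smul_smul, mul_inv_cancel₀ hx.ne', one_smul]
  have hw : w ∈ OmegaC C := by
    refine ⟨?_, hw_def ▸ hC.smul_mem_interior (inv_pos.mpr hx) hxC⟩
    rw [mem_sphere_zero_iff_norm, hw_def, norm_smul, norm_inv, norm_norm, inv_mul_cancel₀ hx.ne']
  have hρ : radialFn K w ≤ ‖x‖ := radialFn_le hx (by rwa [hxw])
  have huw := inner_neg_of_mem_OmegaC hu hw
  have hux : ⟪u, x⟫_ℝ = ‖x‖ * ⟪u, w⟫_ℝ := by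
    rw [hw_def, real_inner_smul_right, mul_inv_cancel_left₀ hx.ne']
  refine ⟨w, hw, ?_⟩
  rw [hux, real_inner_smul_right]
  nlinarith

end

/-- for `φ(v) = -log ρ_K(v)` and `c(v,u) = log |⟪v,u⟫|`,
`(v,u) ∈ ∂^c φ` iff `(v,u) ∈ ∂•K`. -/
theorem stmt16 {n : ℕ} (C K : Set (E n)) (hC : IsPointedCone C) (hK : IsPseudoCone C K)
    (v u : E n) (hv : v ∈ OmegaC C) (hu : u ∈ OmegaCp C) :
    (∀ w ∈ OmegaC C,
        Real.log |⟪v, u⟫_ℝ| - (-Real.log (radialFn K v)) ≤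
          Real.log |⟪w, u⟫_ℝ| - (-Real.log (radialFn K w))) ↔
      IsNormalAt K u (radialFn K v • v) := by
  have hsub w (hw : w ∈ OmegaC C) := cSubgradient_ineq_iff hC hK hu.2 hv hw
  constructor
  · intro h
    refine ⟨(radialFn_mem hC hK hv.2).2, fun y hy => ?_⟩
    have hint : interior K ⊆ {x | ⟪u, x⟫_ℝ ≤ ⟪u, radialFn K v • v⟫_ℝ} := fun x hx => by
      obtain ⟨w, hw, hxw⟩ := exists_mem_OmegaC_inner_le_inner_radialFn_smul hC hK hu.2
        (interior_subset hx) (interior_mono hK.2.2.2.2.2 hx)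
      exact hxw.trans ((hsub w hw).mp (h w hw))
    have hclosed : IsClosed {x | ⟪u, x⟫_ℝ ≤ ⟪u, radialFn K v • v⟫_ℝ} :=
      isClosed_le (by fun_prop) continuous_const
    exact hclosed.closure_subset_iff.mpr hint (hK.subset_closure_interior hC hy)
  · rintro ⟨-, hnormal⟩ w hw
    exact (hsub w hw).mpr (hnormal _ (radialFn_mem hC hK hw.2).2)
end
end

section
/- For a C-pseudo-cone K and u ∈ Ω_{C°} \ ω_K, the equality −h_K(u) = |⟨u, α*_K(u)⟩| · ρ_K(α*_K(u)) holds, and consequently log(−h_K(u)) − log ρ_K(α*_K(u)) = log|⟨u, α*_K(u)⟩|. -/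
open Set Metric MeasureTheory
open scoped InnerProductSpace Pointwise

noncomputable section

/-- for `u ∈ Ω_{C°} \ ω_K`, i.e. `u` is a normal of `K` at the unique
radial point `ρ_K(v) v` with `v = α*_K(u)`, one has `-h_K(u) = |⟪u,v⟫| ρ_K(v)` and
hence `log(-h_K(u)) - log ρ_K(v) = log|⟪u,v⟫|`. -/
theorem stmt19 {n : ℕ} (C K : Set (E n)) (hC : IsPointedCone C) (hK : IsPseudoCone C K)
    (u v : E n) (hu : u ∈ OmegaCp C) (hv : v ∈ OmegaC C)
    (hnorm : IsNormalAt K u (radialFn K v • v))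
    (huniq : ∀ v' ∈ OmegaC C, IsNormalAt K u (radialFn K v' • v') → v' = v) :
    -suppFn K u = |⟪u, v⟫_ℝ| * radialFn K v ∧
      Real.log (-suppFn K u) - Real.log (radialFn K v) = Real.log |⟪u, v⟫_ℝ| := by
  set ρ := radialFn K v with hρdef
  have hx : ρ • v ∈ K := hnorm.1
  -- norm of v is 1
  have hv1 : ‖v‖ = 1 := by
    have := hv.1
    rwa [mem_sphere_zero_iff_norm] at this
  have hvC : v ∈ C := interior_subset hv.2
  -- strict negativity of ⟪u,v⟫
  have huvneg : ⟪u, v⟫_ℝ < 0 := by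
    obtain ⟨ε, hε, hball⟩ := Metric.mem_nhds_iff.mp (mem_interior_iff_mem_nhds.mp hu.2)
    have hmem : u + (ε/2) • v ∈ dualCone C := by
      apply hball
      simp only [Metric.mem_ball, dist_eq_norm]
      have : u + (ε/2) • v - u = (ε/2) • v := by abel
      rw [this, norm_smul, hv1, mul_one, Real.norm_eq_abs, abs_of_pos (by linarith)]
      linarith
    have h1 : ⟪u + (ε/2) • v, v⟫_ℝ ≤ 0 := hmem v hvC
    rw [inner_add_left, real_inner_smul_left, real_inner_self_eq_norm_sq, hv1] at h1
    nlinarith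
  -- ρ ≥ 0
  have hρ0 : 0 ≤ ρ := Real.sInf_nonneg (fun r hr => le_of_lt hr.1)
  -- ρ ≠ 0
  have hρne : ρ ≠ 0 := by
    intro h
    apply hK.2.2.2.1
    have : ρ • v = 0 := by rw [h, zero_smul]
    rwa [this] at hx
  have hρpos : 0 < ρ := lt_of_le_of_ne hρ0 (Ne.symm hρne)
  -- support function equals inner at the point
  have hsup : suppFn K u = ⟪u, ρ • v⟫_ℝ := by
    apply IsGreatest.csSup_eq
    constructor
    · exact ⟨ρ • v, hx, rfl⟩
    · rintro _ ⟨y, hy, rfl⟩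
      exact hnorm.2 y hy
  have hinner : ⟪u, ρ • v⟫_ℝ = ρ * ⟪u, v⟫_ℝ := real_inner_smul_right u v ρ
  have habs : |⟪u, v⟫_ℝ| = -⟪u, v⟫_ℝ := abs_of_neg huvneg
  have hmain : -suppFn K u = |⟪u, v⟫_ℝ| * ρ := by
    rw [hsup, hinner, habs]; ring
  refine ⟨hmain, ?_⟩
  have habspos : 0 < |⟪u, v⟫_ℝ| := abs_pos.mpr (ne_of_lt huvneg)
  rw [hmain, Real.log_mul (ne_of_gt habspos) hρne]
  ring
end
end
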